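/- Let k_1, k_2 ≥ 1 and s_1 ≥ 1, and set k := k_1 + s_1(k_2−1). A homogeneous polynomial P ∈ ℂ[x,y] of degree k−1 lies in F((k_1,k_2),(s_1,1)) if and only if there exists a homogeneous polynomial D ∈ ℂ[x,y] of degree ≥ s_1(k_2−1), all of whose monomials involve only x^{s_1} and y^{s_1}, such that D divides every component of σ_{s_1}(P). -/

import Mathlib

/-- All monomials of `P` involve only `x^s` and `y^s`. -/
def MonoS (s : ℕ) (P : MvPolynomial (Fin 2) ℂ) : Prop :=
  ∀ m ∈ P.support, s ∣ m 0 ∧ s ∣ m 1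

/-- `S ℓ = s_1 ⋯ s_{ℓ-1}` (0-indexed: `Sp s i = ∏_{j<i} s j`, so `Sp s 0 = 1`). -/
def Sp (s : ℕ → ℕ) (i : ℕ) : ℕ := ∏ j ∈ Finset.range i, s j

/-- `F(k,s)`: homogeneous polynomials of degree `k-1` admitting a factorization
`P = P_L ⋯ P_1`, where `P_ℓ` is homogeneous of degree `S_ℓ(k_ℓ-1)` with all monomials
in `x^{S_ℓ}, y^{S_ℓ}` (layers are 0-indexed here). -/
def Fset (L : ℕ) (k s : ℕ → ℕ) : Set (MvPolynomial (Fin 2) ℂ) :=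
  { P | ∃ Q : ℕ → MvPolynomial (Fin 2) ℂ, P = ∏ i ∈ Finset.range L, Q i ∧
      ∀ i < L, (Q i).IsHomogeneous (Sp s i * (k i - 1)) ∧ MonoS (Sp s i) (Q i) }

/-- `p` is the `s`-decomposition `σ_s(P)` of the homogeneous polynomial `P` of degree `m`. -/
def IsSigma (s m : ℕ) (P : MvPolynomial (Fin 2) ℂ)
    (p : Fin s → MvPolynomial (Fin 2) ℂ) : Prop :=
  (∀ i : Fin s, (p i).IsHomogeneous (s * ((m - i.val) / s)) ∧ MonoS s (p i) ∧
      (m < i.val → p i = 0)) ∧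
  P = ∑ i : Fin s,
    MvPolynomial.X 0 ^ i.val * MvPolynomial.X 1 ^ ((m - i.val) % s) * p i


/-!
A form in `x^s, y^s` of degree `s t` is `expand s` of a binary form of degree `t`, and over `ℂ`
binary forms split into linear factors. Hence a common divisor `D` of the components of `σ_s(P)`
with `deg D ≥ s (k₂ - 1)` has a factor `P₂` in `x^s, y^s` of degree exactly `s (k₂ - 1)`; it divides
`P = ∑ xⁱ y^{rᵢ} pᵢ`, and the cofactor of a homogeneous divisor of a homogeneous polynomial is
homogeneous, of degree `k₁ - 1` here. Conversely, if `P = P₁ P₂` then `σ_s(P) = σ_s(P₁) · P₂`,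
since multiplying by a form in `x^s, y^s` does not change exponents modulo `s`.
-/

open MvPolynomial

theorem Polynomial.exists_eq_mul_natDegree_le {K : Type*} [Field K] [IsAlgClosed K]
    {f : Polynomial K} {t u : ℕ} (hf : f.natDegree ≤ t) (hu : u ≤ t) :
    ∃ g h : Polynomial K, f = g * h ∧ g.natDegree ≤ u ∧ h.natDegree ≤ t - u := by
  rcases eq_or_ne f 0 with rfl | hf0
  · exact ⟨0, 0, by simp, by simp, by simp⟩
  obtain ⟨r, hr⟩ : ∃ r, r ∈ Multiset.powersetCard (min u f.natDegree) f.roots := by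
    rw [← Multiset.card_pos_iff_exists_mem, Multiset.card_powersetCard,
      IsAlgClosed.card_roots_eq_natDegree]
    exact Nat.choose_pos (min_le_right _ _)
  rw [Multiset.mem_powersetCard] at hr
  obtain ⟨h, hfgh⟩ := (Multiset.prod_X_sub_C_dvd_iff_le_roots hf0 r).mpr hr.1
  have hg : (r.map fun a => X - C a).prod.natDegree = min u f.natDegree := by
    rw [natDegree_multiset_prod_X_sub_C_eq_card, hr.2]
  refine ⟨_, h, hfgh, hg ▸ min_le_left _ _, ?_⟩
  have hgh : (r.map fun a => X - C a).prod * h ≠ 0 := hfgh ▸ hf0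
  have hdeg := congrArg natDegree hfgh
  rw [natDegree_mul (left_ne_zero_of_mul hgh) (right_ne_zero_of_mul hgh), hg] at hdeg
  omega

namespace MvPolynomial

section Homogeneous

variable {σ R : Type*} [CommSemiring R]

attribute [local instance] gradedAlgebra in
theorem homogeneousComponent_mul_of_isHomogeneous_left {D : MvPolynomial σ R} {e : ℕ}
    (hD : D.IsHomogeneous e) (q : MvPolynomial σ R) (n : ℕ) :
    homogeneousComponent n (D * q) =
      if e ≤ n then D * homogeneousComponent (n - e) q else 0 := by
  classical
  rw [← decomposition.decompose'_apply, ← decomposition.decompose'_apply]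
  exact DirectSum.coe_decompose_mul_of_left_mem (𝒜 := homogeneousSubmodule σ R) n hD

theorem IsHomogeneous.exists_eq_mul_of_dvd {D P : MvPolynomial σ R} {e n : ℕ}
    (hD : D.IsHomogeneous e) (hP : P.IsHomogeneous n) (hDP : D ∣ P) :
    ∃ Q, P = D * Q ∧ Q.IsHomogeneous (n - e) := by
  obtain ⟨q, rfl⟩ := hDP
  have hcomp := homogeneousComponent_mul_of_isHomogeneous_left hD q n
  rw [homogeneousComponent_eq_self hP] at hcomp
  by_cases he : e ≤ n
  · exact ⟨_, by rwa [if_pos he] at hcomp, homogeneousComponent_isHomogeneous _ _⟩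
  · exact ⟨0, by rwa [if_neg he, ← mul_zero D] at hcomp, isHomogeneous_zero _ _ _⟩

theorem IsHomogeneous.expand {φ : MvPolynomial σ R} {n : ℕ} (hφ : φ.IsHomogeneous n) (s : ℕ) :
    (MvPolynomial.expand s φ).IsHomogeneous (s * n) :=
  hφ.aeval _ fun i => isHomogeneous_X_pow i s

theorem IsHomogeneous.of_expand {φ : MvPolynomial σ R} {s n : ℕ} (hs : 0 < s)
    (hφ : (MvPolynomial.expand s φ).IsHomogeneous n) : φ.IsHomogeneous (n / s) := by
  intro d hd
  have hsd : Finsupp.weight 1 (s • d) = n := hφ (by rwa [coeff_expand_smul _ hs.ne'])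
  rw [← hsd, map_nsmul, smul_eq_mul, Nat.mul_div_cancel_left _ hs]

end Homogeneous

theorem IsHomogeneous.apply_zero_add_apply_one {R : Type*} [CommSemiring R]
    {φ : MvPolynomial (Fin 2) R} {n : ℕ} (hφ : φ.IsHomogeneous n) {d : Fin 2 →₀ ℕ}
    (hd : d ∈ φ.support) : d 0 + d 1 = n := by
  simpa [Finsupp.weight_apply, Finsupp.sum_fintype, Fin.sum_univ_two] using
    hφ (mem_support_iff.mp hd)

theorem IsHomogeneous.natDegree_aeval_X_one_le {R : Type*} [CommSemiring R]
    {φ : MvPolynomial (Fin 2) R} {t : ℕ} (hφ : φ.IsHomogeneous t) :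
    (MvPolynomial.aeval (![Polynomial.X, 1] : Fin 2 → Polynomial R) φ).natDegree ≤ t := by
  rw [φ.as_sum, map_sum]
  refine Polynomial.natDegree_sum_le_of_forall_le _ _ fun d hd => ?_
  have hdt := hφ.apply_zero_add_apply_one hd
  rw [aeval_monomial]
  simp only [Polynomial.algebraMap_eq, Finsupp.prod_fintype, Fin.prod_univ_two,
    Matrix.cons_val_zero, Matrix.cons_val_one, Matrix.cons_val_fin_one, one_pow, mul_one,
    pow_zero, implies_true]
  exact (Polynomial.natDegree_C_mul_X_pow_le _ _).trans (by omega)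

-- Dehomogenize at `y = 1`, split the resulting polynomial, and homogenize both factors.
theorem IsHomogeneous.exists_dvd_of_le {K : Type*} [Field K] [IsAlgClosed K]
    {φ : MvPolynomial (Fin 2) K} {t u : ℕ} (hφ : φ.IsHomogeneous t) (hu : u ≤ t) :
    ∃ ψ, ψ ∣ φ ∧ ψ.IsHomogeneous u := by
  obtain ⟨g, h, hgh, hg, hh⟩ :=
    Polynomial.exists_eq_mul_natDegree_le hφ.natDegree_aeval_X_one_le hu
  refine ⟨g.homogenize u, ⟨h.homogenize (t - u), ?_⟩, Polynomial.isHomogeneous_homogenize g⟩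
  rw [← Polynomial.homogenize_mul _ _ hg hh, ← hgh, Nat.add_sub_cancel' hu,
    Polynomial.homogenize_eq_of_isHomogeneous hφ rfl]

end MvPolynomial

theorem monoS_zero (s : ℕ) : MonoS s 0 := by
  simp [MonoS]

theorem MonoS.add {s : ℕ} {P Q : MvPolynomial (Fin 2) ℂ} (hP : MonoS s P) (hQ : MonoS s Q) :
    MonoS s (P + Q) := fun m hm =>
  (Finset.mem_union.mp (support_add hm)).elim (hP m) (hQ m)

theorem MonoS.mul {s : ℕ} {P Q : MvPolynomial (Fin 2) ℂ} (hP : MonoS s P) (hQ : MonoS s Q) :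
    MonoS s (P * Q) := by
  intro m hm
  obtain ⟨u, hu, v, hv, rfl⟩ := Finset.mem_add.mp (support_mul P Q hm)
  exact ⟨dvd_add (hP u hu).1 (hQ v hv).1, dvd_add (hP u hu).2 (hQ v hv).2⟩

theorem monoS_expand (s : ℕ) (φ : MvPolynomial (Fin 2) ℂ) : MonoS s (expand s φ) := by
  intro m hm
  rw [φ.as_sum, map_sum] at hm
  obtain ⟨d, -, hd⟩ := Finset.mem_biUnion.mp (support_sum hm)
  rw [expand_monomial] at hd
  obtain rfl := Finset.mem_singleton.mp (support_monomial_subset hd)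
  exact ⟨⟨d 0, rfl⟩, ⟨d 1, rfl⟩⟩

theorem MonoS.exists_expand_eq {s : ℕ} {P : MvPolynomial (Fin 2) ℂ} (hP : MonoS s P) :
    ∃ P₀, expand s P₀ = P := by
  refine ⟨∑ d ∈ P.support, monomial (d.mapRange (· / s) (Nat.zero_div s)) (coeff d P), ?_⟩
  conv_rhs => rw [P.as_sum]
  rw [map_sum]
  refine Finset.sum_congr rfl fun d hd => ?_
  have hd : s • d.mapRange (· / s) (Nat.zero_div s) = d := by
    ext i
    fin_cases i
    · exact Nat.mul_div_cancel' (hP d hd).1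
    · exact Nat.mul_div_cancel' (hP d hd).2
  rw [expand_monomial, hd]

theorem MonoS.exists_dvd_isHomogeneous {s e u : ℕ} {D : MvPolynomial (Fin 2) ℂ} (hs : 0 < s)
    (hD : D.IsHomogeneous e) (hM : MonoS s D) (hu : s * u ≤ e) :
    ∃ Q, Q ∣ D ∧ Q.IsHomogeneous (s * u) ∧ MonoS s Q := by
  obtain ⟨D₀, rfl⟩ := hM.exists_expand_eq
  have hut : u ≤ e / s := (Nat.le_div_iff_mul_le hs).mpr (by rwa [mul_comm])
  obtain ⟨ψ, hψD, hψ⟩ := (hD.of_expand hs).exists_dvd_of_le hut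
  exact ⟨expand s ψ, map_dvd _ hψD, hψ.expand s, monoS_expand s ψ⟩

theorem isSigma_zero (s m : ℕ) : IsSigma s m 0 0 :=
  ⟨fun _ => ⟨isHomogeneous_zero _ _ _, monoS_zero s, fun _ => rfl⟩, by simp⟩

theorem IsSigma.add {s m : ℕ} {P P' : MvPolynomial (Fin 2) ℂ}
    {p p' : Fin s → MvPolynomial (Fin 2) ℂ}
    (h : IsSigma s m P p) (h' : IsSigma s m P' p') : IsSigma s m (P + P') (p + p') := by
  refine ⟨fun i => ⟨(h.1 i).1.add (h'.1 i).1, (h.1 i).2.1.add (h'.1 i).2.1, fun hi => ?_⟩, ?_⟩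
  · simp [(h.1 i).2.2 hi, (h'.1 i).2.2 hi]
  · rw [h.2, h'.2, ← Finset.sum_add_distrib]
    simp only [Pi.add_apply, mul_add]

theorem IsSigma.sum {ι : Type*} {s m : ℕ} (S : Finset ι) {P : ι → MvPolynomial (Fin 2) ℂ}
    {p : ι → Fin s → MvPolynomial (Fin 2) ℂ} (h : ∀ j ∈ S, IsSigma s m (P j) (p j)) :
    IsSigma s m (∑ j ∈ S, P j) (∑ j ∈ S, p j) := by
  classical
  induction S using Finset.induction_on with
  | empty => exact isSigma_zero s m
  | insert j S hj ih =>
    rw [Finset.sum_insert hj, Finset.sum_insert hj]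
    exact (h j (Finset.mem_insert_self j S)).add
      (ih fun i hi => h i (Finset.mem_insert_of_mem hi))

-- `xᵃ yᵇ = x^(a % s) y^(b % s) · (x^s)^(a / s) (y^s)^(b / s)`, and `(a + b - a % s) % s = b % s`.
theorem exists_isSigma_C_mul_X_pow_mul_X_pow {s : ℕ} (hs : 0 < s) (a b : ℕ) (c : ℂ) :
    ∃ p, IsSigma s (a + b) (C c * X 0 ^ a * X 1 ^ b) p := by
  set i : Fin s := ⟨a % s, Nat.mod_lt a hs⟩
  set q : MvPolynomial (Fin 2) ℂ := expand s (C c * X 0 ^ (a / s) * X 1 ^ (b / s))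
  have hia : (i : ℕ) ≤ a := Nat.mod_le a s
  have hi : a + b - i = s * (a / s) + b := by
    have := Nat.div_add_mod a s
    simp only [i] at hia ⊢
    omega
  refine ⟨Pi.single i q, fun j => ?_, ?_⟩
  · rcases eq_or_ne j i with rfl | hj
    · simp only [Pi.single_eq_same]
      refine ⟨?_, monoS_expand s _, fun h => absurd h (by omega)⟩
      rw [hi, Nat.mul_add_div hs]
      exact ((isHomogeneous_C_mul_X_pow c 0 _).mul (isHomogeneous_X_pow 1 _)).expand s
    · rw [Pi.single_eq_of_ne hj]
      exact ⟨isHomogeneous_zero _ _ _, monoS_zero s, fun _ => rfl⟩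
  · rw [Finset.sum_eq_single i (fun j _ hj => by simp [Pi.single_eq_of_ne hj]) (by simp),
      Pi.single_eq_same, hi, Nat.mul_add_mod]
    simp only [q, map_mul, expand_C, map_pow, expand_X, i]
    conv_lhs => rw [← Nat.div_add_mod a s, ← Nat.div_add_mod b s]
    ring

theorem exists_isSigma {s m : ℕ} (hs : 0 < s) {P : MvPolynomial (Fin 2) ℂ}
    (hP : P.IsHomogeneous m) : ∃ p, IsSigma s m P p := by
  have hmono : ∀ d ∈ P.support, ∃ p, IsSigma s m (monomial d (coeff d P)) p := fun d hd => by
    rw [monomial_fin_two, ← hP.apply_zero_add_apply_one hd]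
    exact exists_isSigma_C_mul_X_pow_mul_X_pow hs _ _ _
  choose! p hp using hmono
  have hsum := IsSigma.sum P.support hp
  rw [← P.as_sum] at hsum
  exact ⟨_, hsum⟩

theorem IsSigma.mul_right {s m j : ℕ} {P Q : MvPolynomial (Fin 2) ℂ}
    {p : Fin s → MvPolynomial (Fin 2) ℂ} (h : IsSigma s m P p) (hQ : Q.IsHomogeneous (s * j))
    (hQs : MonoS s Q) : IsSigma s (m + s * j) (P * Q) (fun i => p i * Q) := by
  have shift : ∀ i : Fin s, p i ≠ 0 → m + s * j - i = (m - i) + s * j := fun i hi => by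
    have := not_lt.mp (mt (h.1 i).2.2 hi)
    omega
  refine ⟨fun i => ?_, ?_⟩
  · by_cases hpi : p i = 0
    · beta_reduce
      rw [hpi, zero_mul]
      exact ⟨isHomogeneous_zero _ _ _, monoS_zero s, fun _ => rfl⟩
    refine ⟨?_, (h.1 i).2.1.mul hQs, fun hlt => absurd ((h.1 i).2.2 (by omega)) hpi⟩
    rw [shift i hpi, Nat.add_mul_div_left _ _ i.pos, mul_add]
    exact (h.1 i).1.mul hQ
  · rw [h.2, Finset.sum_mul]
    refine Finset.sum_congr rfl fun i _ => ?_
    by_cases hpi : p i = 0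
    · simp [hpi]
    rw [shift i hpi, Nat.add_mul_mod_self_left, mul_assoc]

theorem IsSigma.dvd {s m : ℕ} {P D : MvPolynomial (Fin 2) ℂ}
    {p : Fin s → MvPolynomial (Fin 2) ℂ}
    (h : IsSigma s m P p) (hD : ∀ i, D ∣ p i) : D ∣ P :=
  h.2 ▸ Finset.dvd_sum fun i _ => dvd_mul_of_dvd_right (hD i) _

theorem monoS_one (P : MvPolynomial (Fin 2) ℂ) : MonoS 1 P :=
  fun _ _ => ⟨one_dvd _, one_dvd _⟩

theorem mem_Fset_two_iff {k1 k2 s1 : ℕ} {P : MvPolynomial (Fin 2) ℂ} :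
    P ∈ Fset 2 (fun i => if i = 0 then k1 else k2) (fun i => if i = 0 then s1 else 1) ↔
      ∃ A B, P = A * B ∧ A.IsHomogeneous (k1 - 1) ∧ B.IsHomogeneous (s1 * (k2 - 1)) ∧
        MonoS s1 B := by
  simp only [Fset, Sp, Set.mem_ofPred_eq, Finset.prod_range_succ, Finset.prod_range_zero]
  constructor
  · rintro ⟨Q, hPQ, hQ⟩
    obtain ⟨hA, -⟩ := hQ 0 (by norm_num)
    obtain ⟨hB, hBs⟩ := hQ 1 (by norm_num)
    simp only [Finset.prod_range_zero, Finset.prod_range_one, if_pos, one_mul] at hA hB hBs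
    exact ⟨Q 0, Q 1, by rw [hPQ, one_mul], hA, hB, hBs⟩
  · rintro ⟨A, B, rfl, hA, hB, hBs⟩
    refine ⟨fun i => if i = 0 then A else B, by simp, fun i hi => ?_⟩
    interval_cases i
    · simpa using ⟨hA, monoS_one A⟩
    · simpa using ⟨hB, hBs⟩

theorem stmt_6_general (k1 k2 s1 : ℕ) (hk1 : 1 ≤ k1) (hs1 : 1 ≤ s1)
    (K : ℕ) (hK : K = k1 + s1 * (k2 - 1))
    (P : MvPolynomial (Fin 2) ℂ) (hP : P.IsHomogeneous (K - 1)) :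
    P ∈ Fset 2 (fun i => if i = 0 then k1 else k2) (fun i => if i = 0 then s1 else 1) ↔
    ∃ (D : MvPolynomial (Fin 2) ℂ) (e : ℕ) (p : Fin s1 → MvPolynomial (Fin 2) ℂ),
      s1 * (k2 - 1) ≤ e ∧ D.IsHomogeneous e ∧ MonoS s1 D ∧
      IsSigma s1 (K - 1) P p ∧ ∀ i, D ∣ p i := by
  have hdeg : K - 1 = k1 - 1 + s1 * (k2 - 1) := by omega
  rw [mem_Fset_two_iff]
  constructor
  · rintro ⟨A, B, rfl, hA, hB, hBs⟩
    obtain ⟨q, hq⟩ := exists_isSigma hs1 hA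
    exact ⟨B, _, _, le_rfl, hB, hBs, hdeg ▸ hq.mul_right hB hBs, fun i => dvd_mul_left B (q i)⟩
  · rintro ⟨D, e, p, he, hD, hDs, hp, hDp⟩
    obtain ⟨B, hBD, hB, hBs⟩ := hDs.exists_dvd_isHomogeneous hs1 hD he
    obtain ⟨A, hPBA, hA⟩ := hB.exists_eq_mul_of_dvd hP (hp.dvd fun i => hBD.trans (hDp i))
    exact ⟨A, B, hPBA.trans (mul_comm B A), by rwa [hdeg, Nat.add_sub_cancel] at hA, hB, hBs⟩

theorem stmt_6 (k1 k2 s1 : ℕ) (hk1 : 1 ≤ k1) (hk2 : 1 ≤ k2) (hs1 : 1 ≤ s1)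
    (K : ℕ) (hK : K = k1 + s1 * (k2 - 1))
    (P : MvPolynomial (Fin 2) ℂ) (hP : P.IsHomogeneous (K - 1)) :
    P ∈ Fset 2 (fun i => if i = 0 then k1 else k2) (fun i => if i = 0 then s1 else 1) ↔
    ∃ (D : MvPolynomial (Fin 2) ℂ) (e : ℕ) (p : Fin s1 → MvPolynomial (Fin 2) ℂ),
      s1 * (k2 - 1) ≤ e ∧ D.IsHomogeneous e ∧ MonoS s1 D ∧
      IsSigma s1 (K - 1) P p ∧ ∀ i, D ∣ p i :=
  stmt_6_general k1 k2 s1 hk1 hs1 K hK P hP
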